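/- arXiv:math/0211060 — 3 statements merged into one kernel-verified Lean document; each statement's English description precedes it below -/
import Mathlib

section
/- Let k be a field equipped with an involution σ, and assume that either σ is not the identity or the characteristic of k is not 2. Let k₀ = {λ ∈ k : σ(λ) = λ} be the fixed field of σ, and let φ : kˣ → k₀ˣ be the group homomorphism given by φ(λ) = λ·σ(λ). Let V be a finite-dimensional k-vector space of dimension at least 2, and let B be a hermitian form on V (with respect to σ). If φ is surjective, then V contains a nonzero isotropic vector, i.e. there exists v ∈ V with v ≠ 0 and B(v,v) = 0. -/
/-!
Pick `v` with `B v v ≠ 0` (otherwise `v` is isotropic); since `dim V ≥ 2`, the kernel of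
`u ↦ B u v` contains some `u ≠ 0`. Hermitian symmetry makes `B v v` and `B u u` fixed by `σ`,
so if `B u u ≠ 0` then `-B u u / B v v = l σ(l)` for some `l`, and for the orthogonal pair
`v, u` we get `B (l v + u) (l v + u) = l σ(l) B v v + B u u = 0`.
-/

namespace LinearMap

lemma apply_smul_add_self_of_apply_eq_zero {R M : Type*} [CommSemiring R] [AddCommMonoid M]
    [Module R M] {σ : R →+* R} (B : M →ₗ[R] M →ₛₗ[σ] R) {v u : M} (hvu : B v u = 0)
    (huv : B u v = 0) (l : R) :
    B (l • v + u) (l • v + u) = l * σ l * B v v + B u u := by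
  simp only [map_add, map_smul, map_smulₛₗ, add_apply, smul_apply, smul_eq_mul, hvu, huv]
  ring

variable {k V : Type*} [Field k] [AddCommGroup V] [Module k V] {σ : k →+* k}
  {B : V →ₗ[k] V →ₛₗ[σ] k}

lemma smul_add_ne_zero_of_apply_eq_zero {v u : V} (hvv : B v v ≠ 0) (hu : u ≠ 0)
    (huv : B u v = 0) (l : k) : l • v + u ≠ 0 := by
  intro h
  have hl : l = 0 := by
    rw [eq_neg_of_add_eq_zero_right h, map_neg, neg_apply, map_smul, smul_apply, smul_eq_mul,
      neg_eq_zero, mul_eq_zero] at huv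
    exact huv.resolve_right hvv
  rw [hl, zero_smul, zero_add] at h
  exact hu h

lemma exists_isotropic_of_apply_eq_zero
    (hsurj : ∀ a : k, a ≠ 0 → σ a = a → ∃ l : k, l * σ l = a)
    (hherm : ∀ v w : V, σ (B v w) = B w v) {v u : V} (hvv : B v v ≠ 0) (hu : u ≠ 0)
    (huv : B u v = 0) : ∃ x : V, x ≠ 0 ∧ B x x = 0 := by
  by_cases huu : B u u = 0
  · exact ⟨u, hu, huu⟩
  have hvu : B v u = 0 := by rw [← hherm, huv, map_zero]
  obtain ⟨l, hl⟩ := hsurj (-(B u u / B v v)) (by simp [hvv, huu])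
    (by rw [map_neg, map_div₀, hherm, hherm])
  refine ⟨l • v + u, smul_add_ne_zero_of_apply_eq_zero hvv hu huv l, ?_⟩
  rw [B.apply_smul_add_self_of_apply_eq_zero hvu huv, hl]
  field_simp
  ring

end LinearMap

theorem hermitian_exists_isotropic_of_norm_surjective_general
    {k V : Type*} [Field k] [AddCommGroup V] [Module k V]
    [FiniteDimensional k V] (hdim : 2 ≤ Module.finrank k V)
    (σ : k →+* k)
    (hsurj : ∀ a : k, a ≠ 0 → σ a = a → ∃ l : k, l * σ l = a)
    (B : V →ₗ[k] V →ₛₗ[σ] k)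
    (hherm : ∀ v w : V, σ (B v w) = B w v) :
    ∃ v : V, v ≠ 0 ∧ B v v = 0 := by
  obtain ⟨v, hv⟩ := Module.finrank_pos_iff_exists_ne_zero.mp (by omega : 0 < Module.finrank k V)
  by_cases hvv : B v v = 0
  · exact ⟨v, hv, hvv⟩
  obtain ⟨u, huv, hu⟩ := Submodule.exists_mem_ne_zero_of_ne_bot
    (LinearMap.ker_ne_bot_of_finrank_lt (f := B.flip v) (by rw [Module.finrank_self]; omega))
  exact LinearMap.exists_isotropic_of_apply_eq_zero hsurj hherm hvv hu huv

/-- If the norm map `φ : kˣ → k₀ˣ`, `φ(λ) = λ·σ(λ)`, onto the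
units of the fixed field `k₀ = {λ | σ λ = λ}` is surjective, then every
hermitian form on a space of dimension ≥ 2 has a nonzero isotropic vector.
Surjectivity of `φ` is phrased as: every nonzero element of `k` fixed by `σ`
is of the form `l * σ l`. -/
theorem hermitian_exists_isotropic_of_norm_surjective
    {k V : Type*} [Field k] [AddCommGroup V] [Module k V]
    [FiniteDimensional k V] (hdim : 2 ≤ Module.finrank k V)
    (σ : k →+* k) (hσ : Function.Involutive σ)
    (hkey : (∃ x : k, σ x ≠ x) ∨ (2 : k) ≠ 0)
    (hsurj : ∀ a : k, a ≠ 0 → σ a = a → ∃ l : k, l * σ l = a)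
    (B : V →ₗ[k] V →ₛₗ[σ] k)
    (hherm : ∀ v w : V, σ (B v w) = B w v) :
    ∃ v : V, v ≠ 0 ∧ B v v = 0 :=
  hermitian_exists_isotropic_of_norm_surjective_general hdim σ hsurj B hherm
end

section
/- Let k be a field equipped with an involution σ that is not the identity, and let k₀ = {λ ∈ k : σ(λ) = λ} be the fixed field of σ. If k₀ is a C₁ field, then the norm map φ : kˣ → k₀ˣ, φ(λ) = λ·σ(λ), is surjective; that is, for every nonzero a ∈ k₀ there exists λ ∈ k with λ·σ(λ) = a. -/
/-!
Pick `t` with `σ t ≠ t`. For `x, y ∈ k₀` the norm of `x + y t` is the binary quadratic form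
`x² + (t + σ t) x y + t σ(t) y²` over `k₀`, which is anisotropic because `1, t` are linearly
independent over `k₀`. The `C₁` property gives a nontrivial zero of the ternary form
`x² + (t + σ t) x y + t σ(t) y² - a z²`; anisotropy forces `z ≠ 0`, and then
`λ = (x + y t) / z` has norm `a`.
-/

/-- A field `K` is `C₁` if every homogeneous polynomial of degree `d` in `n`
variables with `0 < d < n` has a nontrivial zero. -/
def IsC1Field (K : Type*) [Field K] : Prop :=
  ∀ (n d : ℕ) (f : MvPolynomial (Fin n) K), f.IsHomogeneous d → 0 < d → d < n →
    ∃ x : Fin n → K, MvPolynomial.eval x f = 0 ∧ x ≠ 0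

/-- The fixed subfield `k₀ = {λ | σ λ = λ}` of a field endomorphism. -/
def fixedSubfield {k : Type*} [Field k] (σ : k →+* k) : Subfield k where
  carrier := {x | σ x = x}
  mul_mem' ha hb := by simp_all [map_mul]
  one_mem' := by simp
  add_mem' ha hb := by simp_all [map_add]
  zero_mem' := by simp
  neg_mem' ha := by simp_all [map_neg]
  inv_mem' x hx := by simp_all [map_inv₀]

open MvPolynomial

section TernaryForm

variable {K : Type*} [Field K]

noncomputable def binaryFormSubSq (s n a : K) : MvPolynomial (Fin 3) K :=
  X 0 ^ 2 + C s * (X 0 * X 1) + C n * X 1 ^ 2 - C a * X 2 ^ 2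

theorem isHomogeneous_binaryFormSubSq (s n a : K) : (binaryFormSubSq s n a).IsHomogeneous 2 := by
  have hsq : ∀ i : Fin 3, ((X i : MvPolynomial (Fin 3) K) ^ 2).IsHomogeneous 2 := fun i => by
    simpa using (isHomogeneous_X K i).pow 2
  have hprod : ((X 0 * X 1 : MvPolynomial (Fin 3) K)).IsHomogeneous 2 := by
    simpa using (isHomogeneous_X K 0).mul (isHomogeneous_X K 1)
  refine (((hsq 0).add ?_).add ?_).sub ?_
  · simpa using (isHomogeneous_C _ s).mul hprod
  · simpa using (isHomogeneous_C _ n).mul (hsq 1)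
  · simpa using (isHomogeneous_C _ a).mul (hsq 2)

theorem eval_binaryFormSubSq (s n a : K) (v : Fin 3 → K) :
    eval v (binaryFormSubSq s n a) = v 0 ^ 2 + s * (v 0 * v 1) + n * v 1 ^ 2 - a * v 2 ^ 2 := by
  simp [binaryFormSubSq]

theorem IsC1Field.exists_binaryForm_eq_mul_sq (hK : IsC1Field K) (s n a : K) :
    ∃ x y z : K, ¬(x = 0 ∧ y = 0 ∧ z = 0) ∧ x ^ 2 + s * (x * y) + n * y ^ 2 = a * z ^ 2 := by
  obtain ⟨v, hv, hv0⟩ :=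
    hK 3 2 _ (isHomogeneous_binaryFormSubSq s n a) (by norm_num) (by norm_num)
  refine ⟨v 0, v 1, v 2, fun ⟨h0, h1, h2⟩ => hv0 ?_, ?_⟩
  · funext i
    fin_cases i <;> assumption
  · rw [eval_binaryFormSubSq] at hv
    exact sub_eq_zero.mp hv

end TernaryForm

section Involution

variable {k : Type*} [Field k] {σ : k →+* k}

theorem mul_map_self_eq_zero_iff {l : k} : l * σ l = 0 ↔ l = 0 := by
  simp

theorem eq_zero_of_add_mul_eq_zero {t x y : k} (ht : σ t ≠ t) (hx : σ x = x) (hy : σ y = y)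
    (h : x + y * t = 0) : x = 0 ∧ y = 0 := by
  have hy0 : y = 0 := by
    by_contra hy0
    have htx : t = -x / y := by field_simp; linear_combination h
    exact ht (by rw [htx, map_div₀, map_neg, hx, hy])
  exact ⟨by simpa [hy0] using h, hy0⟩

theorem add_mul_mul_map_add_mul {t x y : k} (hx : σ x = x) (hy : σ y = y) :
    (x + y * t) * σ (x + y * t) = x ^ 2 + (t + σ t) * (x * y) + t * σ t * y ^ 2 := by
  rw [map_add, map_mul, hx, hy]
  ring

end Involution

theorem norm_surjective_of_isC1Field_fixedSubfield_general
    {k : Type*} [Field k]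
    (σ : k →+* k) (hσ : Function.Involutive σ)
    (hne : ∃ x : k, σ x ≠ x)
    (hC1 : IsC1Field (fixedSubfield σ))
    (a : k) (hfix : σ a = a) :
    ∃ l : k, l * σ l = a := by
  obtain ⟨t, ht⟩ := hne
  let s : fixedSubfield σ := ⟨t + σ t, by simp [fixedSubfield, hσ t, add_comm]⟩
  let n : fixedSubfield σ := ⟨t * σ t, by simp [fixedSubfield, hσ t, mul_comm]⟩
  obtain ⟨x, y, z, hxyz, h⟩ := hC1.exists_binaryForm_eq_mul_sq s n ⟨a, hfix⟩
  have hnorm : (x + y * t : k) * σ (x + y * t) = a * (z : k) ^ 2 := by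
    rw [add_mul_mul_map_add_mul x.2 y.2]
    simpa [s, n] using congrArg Subtype.val h
  have hz : (z : k) ≠ 0 := by
    intro hz
    rw [hz, zero_pow two_ne_zero, mul_zero, mul_map_self_eq_zero_iff] at hnorm
    obtain ⟨hx, hy⟩ := eq_zero_of_add_mul_eq_zero ht x.2 y.2 hnorm
    exact hxyz ⟨Subtype.ext hx, Subtype.ext hy, Subtype.ext hz⟩
  refine ⟨(x + y * t) / z, ?_⟩
  rw [map_div₀, div_mul_div_comm, z.2, div_eq_iff (mul_ne_zero hz hz), hnorm]
  ring

/-- If the fixed field `k₀` of a non-identity involution `σ` of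
`k` is a `C₁` field, then the norm map `φ : kˣ → k₀ˣ`, `φ(λ) = λ·σ(λ)`, is
surjective: every nonzero `a ∈ k₀` is of the form `λ·σ(λ)`. -/
theorem norm_surjective_of_isC1Field_fixedSubfield
    {k : Type*} [Field k]
    (σ : k →+* k) (hσ : Function.Involutive σ)
    (hne : ∃ x : k, σ x ≠ x)
    (hC1 : IsC1Field (fixedSubfield σ))
    (a : k) (ha : a ≠ 0) (hfix : σ a = a) :
    ∃ l : k, l * σ l = a :=
  norm_surjective_of_isC1Field_fixedSubfield_general σ hσ hne hC1 a hfix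
end

section
/- Let k be a field equipped with an involution σ, and assume that either σ is not the identity or the characteristic of k is not 2. Let k₀ = {λ ∈ k : σ(λ) = λ} be the fixed field of σ, and assume k₀ is a C₁ field. Let V be a finite-dimensional k-vector space of dimension at least 3, and let B be a hermitian form on V (with respect to σ). Then V contains a nonzero isotropic vector, i.e. there exists v ∈ V with v ≠ 0 and B(v,v) = 0. -/
/-- If the fixed field `k₀` of the involution `σ` is `C₁` (and
`σ` is not the identity, or `char k ≠ 2`), then any hermitian form on a space
of dimension ≥ 3 admits a nonzero isotropic vector. -/
theorem hermitian_exists_isotropic_of_isC1Field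
    {k V : Type*} [Field k] [AddCommGroup V] [Module k V]
    [FiniteDimensional k V] (hdim : 3 ≤ Module.finrank k V)
    (σ : k →+* k) (hσ : Function.Involutive σ)
    (hkey : (∃ x : k, σ x ≠ x) ∨ (2 : k) ≠ 0)
    (hC1 : IsC1Field (fixedSubfield σ))
    (B : V →ₗ[k] V →ₛₗ[σ] k)
    (hherm : ∀ v w : V, σ (B v w) = B w v) :
    ∃ v : V, v ≠ 0 ∧ B v v = 0 := by
  classical
  set K₀ := fixedSubfield σ with hK₀
  -- three linearly independent vectors
  let b := Module.finBasis k V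
  let e : Fin 3 → V := fun i => b (Fin.castLE hdim i)
  have hli : LinearIndependent k e :=
    b.linearIndependent.comp _ (Fin.castLE_injective hdim)
  -- coefficients in the fixed field
  have hq : ∀ i : Fin 3, B (e i) (e i) ∈ K₀ := fun i => hherm (e i) (e i)
  have hp : ∀ i j : Fin 3, B (e i) (e j) + B (e j) (e i) ∈ K₀ := by
    intro i j
    show σ _ = _
    rw [map_add, hherm, hherm, add_comm]
  let q : Fin 3 → K₀ := fun i => ⟨B (e i) (e i), hq i⟩
  let p : Fin 3 → Fin 3 → K₀ := fun i j => ⟨B (e i) (e j) + B (e j) (e i), hp i j⟩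
  open MvPolynomial in
  let f : MvPolynomial (Fin 3) K₀ :=
    C (q 0) * X 0 * X 0 + C (q 1) * X 1 * X 1 + C (q 2) * X 2 * X 2 +
    C (p 0 1) * X 0 * X 1 + C (p 0 2) * X 0 * X 2 + C (p 1 2) * X 1 * X 2
  have hhom : f.IsHomogeneous 2 := by
    have h : ∀ (a : K₀) (i j : Fin 3),
        ((MvPolynomial.C a * MvPolynomial.X i * MvPolynomial.X j :
          MvPolynomial (Fin 3) K₀)).IsHomogeneous 2 := by
      intro a i j
      have := ((MvPolynomial.isHomogeneous_C _ a).mul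
        (MvPolynomial.isHomogeneous_X _ i)).mul (MvPolynomial.isHomogeneous_X _ j)
      simpa using this
    exact ((((((h _ _ _).add (h _ _ _)).add (h _ _ _)).add (h _ _ _)).add
      (h _ _ _)).add (h _ _ _))
  obtain ⟨x, hx0, hxne⟩ := hC1 3 2 f hhom (by norm_num) (by norm_num)
  refine ⟨(x 0 : k) • e 0 + (x 1 : k) • e 1 + (x 2 : k) • e 2, ?_, ?_⟩
  · intro hv
    apply hxne
    have := Fintype.linearIndependent_iff.mp hli (fun i => (x i : k)) ?_
    · funext i
      exact Subtype.ext (this i)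
    · rw [Fin.sum_univ_three]; exact hv
  · have hev : ((MvPolynomial.eval x f : K₀) : k) = 0 := by rw [hx0]; rfl
    have hσx : ∀ i : Fin 3, σ (x i : k) = (x i : k) := fun i => (x i).2
    simp only [f, MvPolynomial.eval_add, MvPolynomial.eval_mul, MvPolynomial.eval_C, MvPolynomial.eval_X] at hev
    push_cast at hev
    simp only [map_add, LinearMap.add_apply, map_smulₛₗ, LinearMap.smul_apply,
      LinearMap.map_smul, smul_eq_mul, hσx, RingHom.id_apply]
    simp only [q, p] at hev
    push_cast at hev
    ring_nf
    ring_nf at hev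
    linear_combination hev
end
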